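/- Optimality of the deterministic greedy dynamic-programming policy for entropic-risk MDPs: Fix λ ≠ 0. Define optimal value functions backward by V*_{T+1}(s) = 0, Q*_t(s,a) = r(s,a) + (1/λ)·log Σ_{s'} P(s'|s,a)·exp(λ·V*_{t+1}(s')), and V*_t(s) = max_a Q*_t(s,a). Let ψ* be any deterministic Markov policy with ψ*_t(s) ∈ argmax_a Q*_t(s,a) for all t and s. Then for every stochastic Markov policy ψ, J^λ(ψ*) ≥ J^λ(ψ); moreover J^λ(ψ*) = (1/λ)·log Σ_s ζ₁(s)·exp(λ·V*_1(s)). -/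

import Mathlib

open Finset
open scoped Classical

/-- A finite-horizon MDP. -/
structure FinMDP (S A : Type) [Fintype S] [Fintype A] where
  P : S → A → S → ℝ
  P_nonneg : ∀ s a s', 0 ≤ P s a s'
  P_sum : ∀ s a, ∑ s', P s a s' = 1
  r : S → A → ℝ
  init : S → ℝ
  init_nonneg : ∀ s, 0 ≤ init s
  init_sum : ∑ s, init s = 1
  T : ℕ
  T_pos : 1 ≤ T

variable {S A : Type} [Fintype S] [Fintype A] [Nonempty S] [Nonempty A]

/-- A stochastic Markov policy: a pmf on actions at each (0-indexed) time and state. -/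
def IsMPolicy {S A : Type} [Fintype A] (ψ : ℕ → S → A → ℝ) : Prop :=
  ∀ t s, (∀ a, 0 ≤ ψ t s a) ∧ ∑ a, ψ t s a = 1

/-- Probability of a trajectory ((s_t, a_t))_{t<T} under the policy ψ. -/
noncomputable def mdpTrajProb (M : FinMDP S A) (ψ : ℕ → S → A → ℝ)
    (ω : Fin M.T → S × A) : ℝ :=
  M.init (ω ⟨0, M.T_pos⟩).1 *
  (∏ t : Fin M.T, ψ t.val (ω t).1 (ω t).2) *
  (∏ t : Fin M.T,
    if h : t.val + 1 < M.T then M.P (ω t).1 (ω t).2 (ω ⟨t.val + 1, h⟩).1 else 1)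

/-- Entropic-risk performance J^λ(ψ) = (1/λ)·log E^ψ[exp(λ·Σ_t r(S_t,A_t))]. -/
noncomputable def mdpJent (M : FinMDP S A) (ψ : ℕ → S → A → ℝ) (lam : ℝ) : ℝ :=
  (1/lam) * Real.log (∑ ω : Fin M.T → S × A,
    mdpTrajProb M ψ ω * Real.exp (lam * ∑ t : Fin M.T, M.r (ω t).1 (ω t).2))

/-- Backward optimal value function: `Vstar m` is V* at the (0-indexed) time
`T − m`, so `Vstar 0 = V*_{T+1} ≡ 0` and `Vstar T = V*_1`; it satisfies
V*_t(s) = max_a Q*_t(s,a). -/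
noncomputable def Vstar (M : FinMDP S A) (lam : ℝ) : ℕ → S → ℝ
  | 0 => fun _ => 0
  | (m+1) => fun s => ⨆ a : A, (M.r s a +
      (1/lam) * Real.log (∑ s', M.P s a s' * Real.exp (lam * Vstar M lam m s')))

/-- Optimal Q-function Q*_t(s,a) = r(s,a) + (1/λ)·log Σ_{s'} P(s'|s,a)·exp(λ·V*_{t+1}(s')),
where `m` counts the remaining steps: time t corresponds to `m = T − 1 − t`. -/
noncomputable def Qstar (M : FinMDP S A) (lam : ℝ) (m : ℕ) (s : S) (a : A) : ℝ :=
  M.r s a + (1/lam) * Real.log (∑ s', M.P s a s' * Real.exp (lam * Vstar M lam m s'))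

/-- The point-mass (deterministic) Markov policy associated with `d`. -/
noncomputable def detPol {S A : Type} (d : ℕ → S → A) : ℕ → S → A → ℝ :=
  fun t s a => if a = d t s then 1 else 0

/-!
Let `W_n(s)` be the expected value of `exp(λ · reward)` over the last `n` steps started in `s`
under a policy. It obeys the backward recursion
`W_{n+1}(s) = Σ_a ψ(a|s) e^{λ r(s,a)} Σ_{s'} P(s'|s,a) W_n(s')`, and the trajectory average is
`Σ_s ζ₁(s) W_T(s)`. The same one-step backup applied to `exp(λ V*_n)` gives the
`ψ`-average of `exp(λ Q*_n(s,·))`, which is at most `exp(λ V*_{n+1}(s))` when `λ > 0` and at least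
it when `λ < 0`, with equality for the greedy action. By induction `W_n ≤ exp(λ V*_n)`
(resp. `≥`), with equality for the greedy policy, and the map `x ↦ (1/λ) log x` is increasing for
`λ > 0` and decreasing for `λ < 0`.
-/

section
omit [Nonempty S] [Nonempty A]

theorem sum_mul_pos_of_sum_pos {ι : Type*} [Fintype ι] {w f : ι → ℝ} (hw : ∀ i, 0 ≤ w i)
    (hsum : 0 < ∑ i, w i) (hf : ∀ i, 0 < f i) : 0 < ∑ i, w i * f i := by
  obtain ⟨i, -, hi⟩ := exists_lt_of_sum_lt (f := fun _ => (0 : ℝ)) (by simpa using hsum)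
  exact sum_pos' (fun j _ => mul_nonneg (hw j) (hf j).le) ⟨i, mem_univ i, mul_pos hi (hf i)⟩

theorem sum_mul_le_of_le {ι : Type*} [Fintype ι] {w f : ι → ℝ} {c : ℝ} (hw : ∀ i, 0 ≤ w i)
    (hw_sum : ∑ i, w i = 1) (hf : ∀ i, f i ≤ c) : ∑ i, w i * f i ≤ c :=
  calc ∑ i, w i * f i ≤ ∑ i, w i * c :=
        sum_le_sum fun i _ => mul_le_mul_of_nonneg_left (hf i) (hw i)
    _ = c := by rw [← sum_mul, hw_sum, one_mul]

theorem le_sum_mul_of_le {ι : Type*} [Fintype ι] {w f : ι → ℝ} {c : ℝ} (hw : ∀ i, 0 ≤ w i)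
    (hw_sum : ∑ i, w i = 1) (hf : ∀ i, c ≤ f i) : c ≤ ∑ i, w i * f i :=
  calc c = ∑ i, w i * c := by rw [← sum_mul, hw_sum, one_mul]
    _ ≤ ∑ i, w i * f i := sum_le_sum fun i _ => mul_le_mul_of_nonneg_left (hf i) (hw i)

theorem prod_dite_succ_lt {X M : Type*} [CommMonoid M] {n : ℕ} (F : X → X → M)
    (ω : Fin (n + 1) → X) :
    ∏ i : Fin (n + 1), (if h : i.val + 1 < n + 1 then F (ω i) (ω ⟨i.val + 1, h⟩) else 1) =
      ∏ i : Fin n, F (ω i.castSucc) (ω i.succ) := by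
  rw [Fin.prod_univ_castSucc]
  simp [Fin.succ]

def backup (P : S → A → S → ℝ) (g : S → A → ℝ) (f : S → ℝ) (s : S) : ℝ :=
  ∑ a, g s a * ∑ s', P s a s' * f s'

/-- `pathWeight P g t n s` sums, over the `n`-step paths leaving `s` at time `t`, their transition
probability times the product of the `g`-weights along them. For `g = expRewardWeight M λ ψ` it is
`E^ψ[exp(λ Σ_{k<n} r(S_{t+k}, A_{t+k})) | S_t = s]`. -/
def pathWeight (P : S → A → S → ℝ) (g : ℕ → S → A → ℝ) : ℕ → ℕ → S → ℝ
  | _, 0 => 1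
  | t, n + 1 => backup P (g t) (pathWeight P g (t + 1) n)

theorem pathWeight_succ (P : S → A → S → ℝ) (g : ℕ → S → A → ℝ) (t n : ℕ) :
    pathWeight P g t (n + 1) = backup P (g t) (pathWeight P g (t + 1) n) := rfl

theorem sum_paths_eq_pathWeight {P : S → A → S → ℝ} (hP : ∀ s a, ∑ s', P s a s' = 1)
    (g : ℕ → S → A → ℝ) (m t : ℕ) (μ : S → ℝ) :
    ∑ ω : Fin (m + 1) → S × A, μ (ω 0).1 * (∏ i : Fin (m + 1), g (t + i) (ω i).1 (ω i).2) *
        ∏ i : Fin m, P (ω i.castSucc).1 (ω i.castSucc).2 (ω i.succ).1 =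
      ∑ s, μ s * pathWeight P g t (m + 1) s := by
  induction m generalizing t μ with
  | zero =>
    rw [← (Equiv.funUnique (Fin 1) (S × A)).symm.sum_comp, Fintype.sum_prod_type]
    simp [pathWeight, backup, hP, mul_sum]
  | succ m ih =>
    rw [← (Fin.consEquiv fun _ => S × A).sum_comp, Fintype.sum_prod_type, Fintype.sum_prod_type]
    simp only [Fin.consEquiv_apply, Fin.prod_univ_succ (n := m)]
    simp only [Fin.prod_univ_succ (n := m + 1), Fin.cons_zero, Fin.cons_succ, Fin.castSucc_zero,
      ← Fin.succ_castSucc]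
    have shift : ∀ i : Fin (m + 1), t + (i.succ : ℕ) = t + 1 + i := fun i => by
      rw [Fin.val_succ]; omega
    rw [pathWeight_succ]
    simp only [shift, Fin.val_zero, add_zero, backup, ← ih, mul_sum]
    refine sum_congr rfl fun s _ => sum_congr rfl fun a _ =>
      sum_congr rfl fun f _ => by ring

theorem sum_paths_dite_eq_pathWeight {P : S → A → S → ℝ} (hP : ∀ s a, ∑ s', P s a s' = 1)
    (g : ℕ → S → A → ℝ) (μ : S → ℝ) {n : ℕ} (hn : 0 < n) :
    ∑ ω : Fin n → S × A, μ (ω ⟨0, hn⟩).1 * (∏ i : Fin n, g i (ω i).1 (ω i).2) *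
        (∏ i : Fin n, if h : i.val + 1 < n then P (ω i).1 (ω i).2 (ω ⟨i.val + 1, h⟩).1 else 1) =
      ∑ s, μ s * pathWeight P g 0 n s := by
  cases n with
  | zero => exact absurd hn (lt_irrefl 0)
  | succ m =>
    simp only [prod_dite_succ_lt (fun x y : S × A => P x.1 x.2 y.1), Fin.mk_zero]
    simpa only [zero_add] using sum_paths_eq_pathWeight hP g m 0 μ

theorem backup_mono {P : S → A → S → ℝ} (hP : ∀ s a s', 0 ≤ P s a s') {g : S → A → ℝ}
    (hg : ∀ s a, 0 ≤ g s a) {f f' : S → ℝ} (h : ∀ s, f s ≤ f' s) (s : S) :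
    backup P g f s ≤ backup P g f' s := by
  unfold backup
  gcongr with a _ s' _
  · exact hg s a
  · exact hP s a s'
  · exact h s'

section Comparison

variable {P : S → A → S → ℝ} {g : ℕ → S → A → ℝ}

theorem pathWeight_le (hP : ∀ s a s', 0 ≤ P s a s') (hg : ∀ t s a, 0 ≤ g t s a)
    {u : ℕ → S → ℝ} (h0 : ∀ s, 1 ≤ u 0 s) (hu : ∀ t n s, backup P (g t) (u n) s ≤ u (n + 1) s)
    (t n : ℕ) (s : S) : pathWeight P g t n s ≤ u n s := by
  induction n generalizing t s with
  | zero => exact h0 s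
  | succ n ih => exact (backup_mono hP (hg t) (ih (t + 1)) s).trans (hu t n s)

theorem le_pathWeight (hP : ∀ s a s', 0 ≤ P s a s') (hg : ∀ t s a, 0 ≤ g t s a)
    {u : ℕ → S → ℝ} (h0 : ∀ s, u 0 s ≤ 1) (hu : ∀ t n s, u (n + 1) s ≤ backup P (g t) (u n) s)
    (t n : ℕ) (s : S) : u n s ≤ pathWeight P g t n s := by
  induction n generalizing t s with
  | zero => exact h0 s
  | succ n ih => exact (hu t n s).trans (backup_mono hP (hg t) (ih (t + 1)) s)

theorem pathWeight_pos (hP : ∀ s a s', 0 ≤ P s a s') (hP_sum : ∀ s a, 0 < ∑ s', P s a s')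
    (hg : ∀ t s a, 0 ≤ g t s a) (hg_sum : ∀ t s, 0 < ∑ a, g t s a) (t n : ℕ) (s : S) :
    0 < pathWeight P g t n s := by
  induction n generalizing t s with
  | zero => exact one_pos
  | succ n ih =>
    exact sum_mul_pos_of_sum_pos (hg t s) (hg_sum t s) fun a =>
      sum_mul_pos_of_sum_pos (hP s a) (hP_sum s a) (ih (t + 1))

end Comparison

noncomputable def expRewardWeight (M : FinMDP S A) (lam : ℝ) (ψ : ℕ → S → A → ℝ) (t : ℕ) (s : S)
    (a : A) : ℝ :=
  ψ t s a * Real.exp (lam * M.r s a)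

theorem mdpJent_eq_log_sum_pathWeight (M : FinMDP S A) (ψ : ℕ → S → A → ℝ) (lam : ℝ) :
    mdpJent M ψ lam =
      1 / lam * Real.log (∑ s, M.init s * pathWeight M.P (expRewardWeight M lam ψ) 0 M.T s) := by
  rw [mdpJent, ← sum_paths_dite_eq_pathWeight M.P_sum _ _ M.T_pos]
  congr 2
  refine sum_congr rfl fun ω _ => ?_
  rw [mdpTrajProb, mul_sum, Real.exp_sum]
  simp only [expRewardWeight, prod_mul_distrib]
  ring

theorem expRewardWeight_nonneg (M : FinMDP S A) (lam : ℝ) {ψ : ℕ → S → A → ℝ} (hψ : IsMPolicy ψ)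
    (t : ℕ) (s : S) (a : A) : 0 ≤ expRewardWeight M lam ψ t s a :=
  mul_nonneg ((hψ t s).1 a) (Real.exp_pos _).le

theorem sum_expRewardWeight_pos (M : FinMDP S A) (lam : ℝ) {ψ : ℕ → S → A → ℝ}
    (hψ : IsMPolicy ψ) (t : ℕ) (s : S) : 0 < ∑ a, expRewardWeight M lam ψ t s a :=
  sum_mul_pos_of_sum_pos (hψ t s).1 ((hψ t s).2 ▸ one_pos) fun _ => Real.exp_pos _

theorem exp_mul_Qstar (M : FinMDP S A) {lam : ℝ} (hlam : lam ≠ 0) (m : ℕ) (s : S) (a : A) :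
    Real.exp (lam * Qstar M lam m s a) =
      Real.exp (lam * M.r s a) * ∑ s', M.P s a s' * Real.exp (lam * Vstar M lam m s') := by
  have hpos : 0 < ∑ s', M.P s a s' * Real.exp (lam * Vstar M lam m s') :=
    sum_mul_pos_of_sum_pos (M.P_nonneg s a) (M.P_sum s a ▸ one_pos) fun _ => Real.exp_pos _
  rw [Qstar, mul_add, Real.exp_add, ← mul_assoc, mul_one_div_cancel hlam, one_mul,
    Real.exp_log hpos]

theorem Qstar_le_Vstar_succ (M : FinMDP S A) (lam : ℝ) (m : ℕ) (s : S) (a : A) :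
    Qstar M lam m s a ≤ Vstar M lam (m + 1) s :=
  le_ciSup (Set.finite_range _).bddAbove a

theorem Vstar_succ_eq_Qstar [Nonempty A] (M : FinMDP S A) (lam : ℝ) {m : ℕ} {s : S} {b : A}
    (hb : ∀ a, Qstar M lam m s a ≤ Qstar M lam m s b) : Vstar M lam (m + 1) s = Qstar M lam m s b :=
  le_antisymm (ciSup_le hb) (Qstar_le_Vstar_succ M lam m s b)

theorem backup_exp_Vstar (M : FinMDP S A) {lam : ℝ} (hlam : lam ≠ 0) (ψ : ℕ → S → A → ℝ)
    (t m : ℕ) (s : S) :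
    backup M.P (expRewardWeight M lam ψ t) (fun s' => Real.exp (lam * Vstar M lam m s')) s =
      ∑ a, ψ t s a * Real.exp (lam * Qstar M lam m s a) := by
  simp only [backup, expRewardWeight, exp_mul_Qstar M hlam, mul_assoc]

theorem pathWeight_le_exp_Vstar (M : FinMDP S A) {lam : ℝ} (hlam : 0 < lam) {ψ : ℕ → S → A → ℝ}
    (hψ : IsMPolicy ψ) (t n : ℕ) (s : S) :
    pathWeight M.P (expRewardWeight M lam ψ) t n s ≤ Real.exp (lam * Vstar M lam n s) := by
  refine pathWeight_le M.P_nonneg (expRewardWeight_nonneg M lam hψ)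
    (u := fun n s => Real.exp (lam * Vstar M lam n s)) (fun s => by simp [Vstar]) ?_ t n s
  intro t n s
  rw [backup_exp_Vstar M hlam.ne' ψ t n s]
  exact sum_mul_le_of_le (hψ t s).1 (hψ t s).2 fun a =>
    Real.exp_le_exp.2 (mul_le_mul_of_nonneg_left (Qstar_le_Vstar_succ M lam n s a) hlam.le)

theorem exp_Vstar_le_pathWeight (M : FinMDP S A) {lam : ℝ} (hlam : lam < 0) {ψ : ℕ → S → A → ℝ}
    (hψ : IsMPolicy ψ) (t n : ℕ) (s : S) :
    Real.exp (lam * Vstar M lam n s) ≤ pathWeight M.P (expRewardWeight M lam ψ) t n s := by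
  refine le_pathWeight M.P_nonneg (expRewardWeight_nonneg M lam hψ)
    (u := fun n s => Real.exp (lam * Vstar M lam n s)) (fun s => by simp [Vstar]) ?_ t n s
  intro t n s
  rw [backup_exp_Vstar M hlam.ne ψ t n s]
  exact le_sum_mul_of_le (hψ t s).1 (hψ t s).2 fun a =>
    Real.exp_le_exp.2 (mul_le_mul_of_nonpos_left (Qstar_le_Vstar_succ M lam n s a) hlam.le)

theorem pathWeight_detPol [Nonempty A] (M : FinMDP S A) {lam : ℝ} (hlam : lam ≠ 0)
    {d : ℕ → S → A} (hd : ∀ t, t < M.T → ∀ s a, Qstar M lam (M.T - 1 - t) s a ≤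
        Qstar M lam (M.T - 1 - t) s (d t s))
    (n t : ℕ) (hn : t + n = M.T) (s : S) :
    pathWeight M.P (expRewardWeight M lam (detPol d)) t n s = Real.exp (lam * Vstar M lam n s) := by
  induction n generalizing t s with
  | zero => simp [pathWeight, Vstar]
  | succ n ih =>
    have hrest : pathWeight M.P (expRewardWeight M lam (detPol d)) (t + 1) n =
        fun s' => Real.exp (lam * Vstar M lam n s') := funext (ih (t + 1) (by omega))
    have hgreedy : ∀ a, Qstar M lam n s a ≤ Qstar M lam n s (d t s) := by
      simpa [show M.T - 1 - t = n by omega] using hd t (by omega) s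
    rw [pathWeight_succ, hrest, backup_exp_Vstar M hlam, Vstar_succ_eq_Qstar M lam hgreedy]
    simp [detPol]

end

/-- **Optimality of the deterministic greedy dynamic-programming policy for
entropic-risk MDPs**: if ψ*_t(s) maximizes Q*_t(s,·) for every t and s, then ψ*
dominates every stochastic Markov policy, and J^λ(ψ*) =
(1/λ)·log Σ_s ζ₁(s)·exp(λ·V*_1(s)). -/
theorem entropic_mdp_greedy_optimal
    (M : FinMDP S A) (lam : ℝ) (hlam : lam ≠ 0)
    (d : ℕ → S → A)
    (hd : ∀ t, t < M.T → ∀ s a, Qstar M lam (M.T - 1 - t) s a ≤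
        Qstar M lam (M.T - 1 - t) s (d t s)) :
    (∀ ψ : ℕ → S → A → ℝ, IsMPolicy ψ → mdpJent M ψ lam ≤ mdpJent M (detPol d) lam) ∧
    mdpJent M (detPol d) lam
      = (1/lam) * Real.log (∑ s, M.init s * Real.exp (lam * Vstar M lam M.T s)) := by
  have hinit : 0 < ∑ s, M.init s := M.init_sum ▸ one_pos
  have hgreedy : mdpJent M (detPol d) lam =
      1 / lam * Real.log (∑ s, M.init s * Real.exp (lam * Vstar M lam M.T s)) := by
    simp only [mdpJent_eq_log_sum_pathWeight, pathWeight_detPol M hlam hd M.T 0 (zero_add _)]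
  refine ⟨fun ψ hψ => ?_, hgreedy⟩
  rw [hgreedy, mdpJent_eq_log_sum_pathWeight]
  rcases hlam.lt_or_gt with hneg | hpos
  · refine mul_le_mul_of_nonpos_left (Real.log_le_log ?_ ?_) (one_div_nonpos.2 hneg.le)
    · exact sum_mul_pos_of_sum_pos M.init_nonneg hinit fun _ => Real.exp_pos _
    · exact sum_le_sum fun s _ => mul_le_mul_of_nonneg_left
        (exp_Vstar_le_pathWeight M hneg hψ 0 M.T s) (M.init_nonneg s)
  · refine mul_le_mul_of_nonneg_left (Real.log_le_log ?_ ?_) (one_div_nonneg.2 hpos.le)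
    · exact sum_mul_pos_of_sum_pos M.init_nonneg hinit fun s => pathWeight_pos M.P_nonneg
        (fun s a => M.P_sum s a ▸ one_pos) (expRewardWeight_nonneg M lam hψ)
        (sum_expRewardWeight_pos M lam hψ) 0 M.T s
    · exact sum_le_sum fun s _ => mul_le_mul_of_nonneg_left
        (pathWeight_le_exp_Vstar M hpos hψ 0 M.T s) (M.init_nonneg s)
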